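/- Suppose the augmented system [[C, P̃],[conj(P̃), C*]] [α; conj(α)] = [y; conj(y)] holds with C Hermitian, C and P := C - P̃ C^{-*} conj(P̃) invertible. Then α = P^{-1} y - C^{-1} P̃ P^{-*} conj(y). -/

import Mathlib

/-!
Eliminating `conj α` with the second block row turns the system into `P α = y - P̃ C^{-*} conj y`.
The Schur complements `P = C - P̃ C^{-*} conj P̃` and `P^* = C^* - conj P̃ C⁻¹ P̃` satisfy the
push-through identity `P C⁻¹ P̃ = P̃ C^{-*} P^*`, which rewrites `P⁻¹ P̃ C^{-*}` as `C⁻¹ P̃ P^{-*}`.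
-/

open Matrix Complex

namespace Matrix

variable {m n R S : Type*}

theorem map_map_starRingEnd [CommSemiring R] [StarRing R] (M : Matrix m n R) :
    (M.map (starRingEnd R)).map (starRingEnd R) = M := by
  ext i j
  simp

variable [Fintype m] [Fintype n] [DecidableEq n] [CommRing R] [CommRing S]

theorem map_nonsing_inv (f : R →+* S) {M : Matrix n n R} (hM : IsUnit M.det) :
    M⁻¹.map f = (M.map f)⁻¹ := by
  refine (inv_eq_right_inv ?_).symm
  rw [← Matrix.map_mul, mul_nonsing_inv _ hM, Matrix.map_one _ f.map_zero f.map_one]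

theorem isUnit_det_map (f : R →+* S) {M : Matrix n n R} (hM : IsUnit M.det) :
    IsUnit (M.map f).det := by
  simpa only [RingHom.map_det, RingHom.mapMatrix_apply] using hM.map f

theorem schur_mul_inv_mul {A B E D : Matrix n n R} (hA : IsUnit A.det) (hD : IsUnit D.det) :
    (A - B * D⁻¹ * E) * (A⁻¹ * B) = B * D⁻¹ * (D - E * A⁻¹ * B) := by
  simp only [Matrix.sub_mul, Matrix.mul_sub, mul_assoc]
  rw [← mul_assoc A, mul_nonsing_inv _ hA, one_mul, nonsing_inv_mul _ hD, mul_one]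

theorem inv_schur_mul_mul_inv {A B E D : Matrix n n R} (hA : IsUnit A.det) (hD : IsUnit D.det)
    (hP : IsUnit (A - B * D⁻¹ * E).det) (hQ : IsUnit (D - E * A⁻¹ * B).det) :
    (A - B * D⁻¹ * E)⁻¹ * (B * D⁻¹) = A⁻¹ * B * (D - E * A⁻¹ * B)⁻¹ := by
  calc (A - B * D⁻¹ * E)⁻¹ * (B * D⁻¹)
      = (A - B * D⁻¹ * E)⁻¹ * (B * D⁻¹ * (D - E * A⁻¹ * B)) * (D - E * A⁻¹ * B)⁻¹ := by
        rw [Matrix.mul_assoc (A - B * D⁻¹ * E)⁻¹, mul_nonsing_inv_cancel_right _ _ hQ]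
    _ = A⁻¹ * B * (D - E * A⁻¹ * B)⁻¹ := by
        rw [← schur_mul_inv_mul hA hD, nonsing_inv_mul_cancel_left _ _ hP]

theorem schur_mulVec_of_fromBlocks_mulVec {A : Matrix m m R} {B : Matrix m n R}
    {E : Matrix n m R} {D : Matrix n n R} (hD : IsUnit D.det) {x u : m → R} {z v : n → R}
    (h : fromBlocks A B E D *ᵥ Sum.elim x z = Sum.elim u v) :
    (A - B * D⁻¹ * E) *ᵥ x = u - (B * D⁻¹) *ᵥ v := by
  rw [fromBlocks_mulVec, Sum.elim_comp_inl, Sum.elim_comp_inr] at h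
  have hu : A *ᵥ x + B *ᵥ z = u := funext fun i => congrFun h (Sum.inl i)
  have hv : E *ᵥ x + D *ᵥ z = v := funext fun i => congrFun h (Sum.inr i)
  have hz : z = D⁻¹ *ᵥ (v - E *ᵥ x) := by
    rw [← hv, add_sub_cancel_left, mulVec_mulVec, nonsing_inv_mul _ hD, one_mulVec]
  rw [← hu, hz, sub_mulVec, mulVec_sub, ← mulVec_mulVec, ← mulVec_mulVec, ← mulVec_mulVec,
    mulVec_sub B]
  abel

end Matrix

theorem stmt_16_general (n : ℕ)
    (C Pt : Matrix (Fin n) (Fin n) ℂ)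
    (Cc Ptc : Matrix (Fin n) (Fin n) ℂ)
    (hCc : Cc = C.map (starRingEnd ℂ)) (hPtc : Ptc = Pt.map (starRingEnd ℂ))
    (hC : IsUnit C.det)
    (P : Matrix (Fin n) (Fin n) ℂ)
    (hP : P = C - Pt * Cc⁻¹ * Ptc)
    (hPu : IsUnit P.det)
    (Pc : Matrix (Fin n) (Fin n) ℂ) (hPc : Pc = P.map (starRingEnd ℂ))
    (α y : Fin n → ℂ)
    (hsys : (Matrix.fromBlocks C Pt Ptc Cc).mulVec (Sum.elim α (star α)) =
      Sum.elim y (star y)) :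
    α = P⁻¹.mulVec y - (C⁻¹ * Pt * Pc⁻¹).mulVec (star y) := by
  have hCcu : IsUnit Cc.det := hCc ▸ isUnit_det_map _ hC
  have hPcu : IsUnit Pc.det := hPc ▸ isUnit_det_map _ hPu
  have hPc_schur : Pc = Cc - Ptc * C⁻¹ * Pt := by
    rw [hPc, hP, Matrix.map_sub _ (map_sub _), Matrix.map_mul, Matrix.map_mul, hCc, hPtc,
      map_nonsing_inv _ (isUnit_det_map _ hC), map_map_starRingEnd, map_map_starRingEnd]
  have hPα : P *ᵥ α = y - (Pt * Cc⁻¹) *ᵥ star y :=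
    hP ▸ schur_mulVec_of_fromBlocks_mulVec hCcu hsys
  have hpush : P⁻¹ * (Pt * Cc⁻¹) = C⁻¹ * Pt * Pc⁻¹ := by
    rw [hP, hPc_schur]
    exact inv_schur_mul_mul_inv hC hCcu (hP ▸ hPu) (hPc_schur ▸ hPcu)
  calc α = P⁻¹ *ᵥ (P *ᵥ α) := by rw [mulVec_mulVec, nonsing_inv_mul _ hPu, one_mulVec]
    _ = P⁻¹ *ᵥ y - (C⁻¹ * Pt * Pc⁻¹) *ᵥ star y := by
        rw [hPα, mulVec_sub, mulVec_mulVec, hpush]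

theorem stmt_16 (n : ℕ)
    (C Pt : Matrix (Fin n) (Fin n) ℂ)
    (hCherm : C.IsHermitian)
    (Cc Ptc : Matrix (Fin n) (Fin n) ℂ)
    (hCc : Cc = C.map (starRingEnd ℂ)) (hPtc : Ptc = Pt.map (starRingEnd ℂ))
    (hC : IsUnit C.det)
    (P : Matrix (Fin n) (Fin n) ℂ)
    (hP : P = C - Pt * Cc⁻¹ * Ptc)
    (hPu : IsUnit P.det)
    (Pc : Matrix (Fin n) (Fin n) ℂ) (hPc : Pc = P.map (starRingEnd ℂ))
    (α y : Fin n → ℂ)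
    (hsys : (Matrix.fromBlocks C Pt Ptc Cc).mulVec (Sum.elim α (star α)) =
      Sum.elim y (star y)) :
    α = P⁻¹.mulVec y - (C⁻¹ * Pt * Pc⁻¹).mulVec (star y) :=
  stmt_16_general n C Pt Cc Ptc hCc hPtc hC P hP hPu Pc hPc α y hsys
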